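/- arXiv:2112.09479 — 2 statements merged into one kernel-verified Lean document; each statement's English description precedes it below -/
import Mathlib

section
/- Let (Φ'_i) and (Φ''_i) be sequences of nonnegative reals and (X_i) a sequence of nonnegative reals satisfying, for each i: Φ'_{i+1} ≤ (1/2)·(Φ'_i + Φ''_i), Φ''_{i+1} ≤ (1/2)·Φ''_i + X_i, and X_i ≤ Φ'_i − Φ'_{i+1}. Define Φ_i = Φ'_i + Φ''_i. Then for every i ≥ 1, Φ_{i+1} ≤ (7/8)·Φ_{i−1}. -/
/-- Potential-drop lemma: under the stated recurrences, Φ_{i+1} ≤ (7/8)·Φ_{i-1}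
for all i ≥ 1, where Φ_i = Φ'_i + Φ''_i. -/
theorem stmt5 (Φ' Φ'' X : ℕ → ℝ)
    (hΦ' : ∀ i, 0 ≤ Φ' i) (hΦ'' : ∀ i, 0 ≤ Φ'' i) (hX : ∀ i, 0 ≤ X i)
    (hA : ∀ i, Φ' (i + 1) ≤ (1 / 2) * (Φ' i + Φ'' i))
    (hB : ∀ i, Φ'' (i + 1) ≤ (1 / 2) * Φ'' i + X i)
    (hC : ∀ i, X i ≤ Φ' i - Φ' (i + 1)) :
    ∀ i : ℕ, 1 ≤ i →
      Φ' (i + 1) + Φ'' (i + 1) ≤ (7 / 8) * (Φ' (i - 1) + Φ'' (i - 1)) := by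
  intro i hi
  obtain ⟨j, rfl⟩ := Nat.exists_eq_add_of_le hi
  simp only [Nat.add_sub_cancel_left] at *
  have h0 := hΦ' j
  have h0b := hΦ'' j
  have h1 := hA j
  have h2 := hB j
  have h3 := hC j
  have h4 := hA (j + 1)
  have h5 := hB (j + 1)
  have h6 := hC (j + 1)
  have : 1 + j + 1 = j + 1 + 1 := by ring
  rw [this]
  have hj1 : (1 : ℕ) + j = j + 1 := by ring
  rw [hj1] at *
  linarith
end

section
/- Let T be a finite rooted tree with root r, let u be a vertex, and v a strict ancestor of u. Define between(u,v) as the set of edges (w,x) of T (oriented toward the root) reachable both from u without crossing v and from v without crossing u; i.e., edges on the path from u to v together with all edges in subtrees hanging off internal vertices of that path. Let p be an internal vertex of the path from u to v, with incident path-edges e' (toward u) and e'' (toward v). Then between(u,v) = between(u,p) ⊔ between(p,v) ⊔ ⊔_{e incoming to p, e ∉ {e', e''}} (edges of the subtree hanging from p via e, including e itself). -/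
/-- `ancEq parent a b` : `a` is an ancestor of `b` (possibly `a = b`) in the rooted
tree given by the parent function. -/
def ancEq {V : Type} (parent : V → V) (a b : V) : Prop := ∃ k : ℕ, parent^[k] b = a

/-- The set `between u v` of edges (each edge (w, parent w) identified with its lower
endpoint w) reachable both from u without crossing v and from v without crossing u:
edges on the u–v path together with edges in subtrees hanging off internal vertices. -/
def between {V : Type} (parent : V → V) (u v : V) : Set V :=
  { w | ∃ y, parent y = v ∧ ancEq parent y u ∧ ancEq parent y w ∧
      (w = u ∨ ¬ ancEq parent u w) }

namespace Stmt9Aux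

variable {V : Type} {parent : V → V} {r : V}

lemma trans' {a b c : V} (h1 : ancEq parent a b) (h2 : ancEq parent b c) :
    ancEq parent a c := by
  obtain ⟨k, hk⟩ := h1; obtain ⟨m, hm⟩ := h2
  exact ⟨k + m, by rw [Function.iterate_add_apply, hm, hk]⟩

lemma cycle_root (hroot : parent r = r) (hreach : ∀ x : V, ∃ k : ℕ, parent^[k] x = r)
    {x : V} {k : ℕ} (hk : k ≠ 0) (h : parent^[k] x = x) : x = r := by
  obtain ⟨m, hm⟩ := hreach x
  have ht : ∀ t, parent^[k * t] x = x := by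
    intro t
    induction t with
    | zero => simp
    | succ n ih => rw [Nat.mul_succ, Function.iterate_add_apply, h, ih]
  have hle : m ≤ k * m := Nat.le_mul_of_pos_left m (Nat.pos_of_ne_zero hk)
  calc x = parent^[k * m] x := (ht m).symm
    _ = parent^[k * m - m] (parent^[m] x) := by
        rw [← Function.iterate_add_apply, Nat.sub_add_cancel hle]
    _ = r := by rw [hm, Function.iterate_fixed hroot]

lemma antisymm' (hroot : parent r = r) (hreach : ∀ x : V, ∃ k : ℕ, parent^[k] x = r)
    {a b : V} (h1 : ancEq parent a b) (h2 : ancEq parent b a) : a = b := by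
  obtain ⟨k, hk⟩ := h1
  match k, hk with
  | 0, hk => simpa using hk.symm
  | k + 1, hk =>
    obtain ⟨m, hm⟩ := h2
    have hcy : parent^[(k + 1) + m] a = a := by
      rw [Function.iterate_add_apply, hm, hk]
    have har : a = r := cycle_root hroot hreach (by omega) hcy
    have hbr : b = r := by rw [← hm, har, Function.iterate_fixed hroot]
    rw [har, hbr]

lemma total' {a b c : V} (h1 : ancEq parent a c) (h2 : ancEq parent b c) :
    ancEq parent a b ∨ ancEq parent b a := by
  obtain ⟨k, hk⟩ := h1; obtain ⟨m, hm⟩ := h2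
  rcases le_total m k with h | h
  · exact Or.inl ⟨k - m, by
      rw [← hm, ← Function.iterate_add_apply, Nat.sub_add_cancel h]; exact hk⟩
  · exact Or.inr ⟨m - k, by
      rw [← hk, ← Function.iterate_add_apply, Nat.sub_add_cancel h]; exact hm⟩

lemma exists_child {a b : V} (h : ancEq parent a b) (hne : a ≠ b) :
    ∃ c, parent c = a ∧ ancEq parent c b := by
  obtain ⟨k, hk⟩ := h
  match k, hk with
  | 0, hk => exact absurd (by simpa using hk.symm) hne
  | k + 1, hk =>
    exact ⟨parent^[k] b, by rw [← hk, Function.iterate_succ_apply'], ⟨k, rfl⟩⟩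

lemma anc_parent {a b : V} (h : ancEq parent a b) (hne : a ≠ b) :
    ancEq parent a (parent b) := by
  obtain ⟨k, hk⟩ := h
  match k, hk with
  | 0, hk => exact absurd (by simpa using hk.symm) hne
  | k + 1, hk => exact ⟨k, by rw [← Function.iterate_succ_apply]; exact hk⟩

/-- Two children of the same vertex comparable by ancestry coincide, unless the
lower one is the root. -/
lemma sib (hroot : parent r = r) (hreach : ∀ x : V, ∃ k : ℕ, parent^[k] x = r)
    {q a b : V} (ha : parent a = q) (hb : parent b = q)
    (h : ancEq parent a b) : a = b ∨ a = r := by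
  obtain ⟨k, hk⟩ := h
  match k, hk with
  | 0, hk => exact Or.inl (by simpa using hk.symm)
  | k + 1, hk =>
    have h1 : ancEq parent a q :=
      ⟨k, by rw [← hb, ← Function.iterate_succ_apply]; exact hk⟩
    have h2 : ancEq parent q a := ⟨1, ha⟩
    have haq : a = q := antisymm' hroot hreach h1 h2
    exact Or.inr (cycle_root hroot hreach (k := 1) one_ne_zero (by
      simpa [haq] using ha))

/-- A child of `p` that is an ancestor of `p` forces `p = r`. -/
lemma child_not_anc (hroot : parent r = r) (hreach : ∀ x : V, ∃ k : ℕ, parent^[k] x = r)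
    {z q : V} (hz : parent z = q) (h : ancEq parent z q) : q = r := by
  have hzq : z = q := antisymm' hroot hreach h ⟨1, hz⟩
  exact cycle_root hroot hreach (k := 1) one_ne_zero (by simpa [hzq] using hz)

end Stmt9Aux

open Stmt9Aux in
/-- Splitting `between u v` at an internal vertex p of the u–v path:
between(u,v) is the disjoint union of between(u,p), between(p,v) and, for each child
w of p not towards u, the edge set of the subtree hanging from p via w (including
the edge (w,p) itself). -/
theorem stmt9 {V : Type} [Fintype V] (parent : V → V) (r : V)
    (hroot : parent r = r)
    (hreach : ∀ x : V, ∃ k : ℕ, parent^[k] x = r)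
    (u v p : V)
    (hvu : ancEq parent v u) (hvu' : v ≠ u)
    (hpu : ancEq parent p u) (hpu' : p ≠ u)
    (hvp : ancEq parent v p) (hvp' : v ≠ p) :
    (between parent u v =
      between parent u p ∪ between parent p v ∪
        ⋃ w ∈ {w : V | parent w = p ∧ ¬ ancEq parent w u ∧ w ≠ p},
          {x : V | ancEq parent w x}) ∧
    Disjoint (between parent u p) (between parent p v) ∧
    (∀ w : V, parent w = p → ¬ ancEq parent w u → w ≠ p →
      Disjoint {x : V | ancEq parent w x}
        (between parent u p ∪ between parent p v)) ∧
    (∀ w w' : V, parent w = p → ¬ ancEq parent w u → w ≠ p →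
      parent w' = p → ¬ ancEq parent w' u → w' ≠ p → w ≠ w' →
      Disjoint {x : V | ancEq parent w x} {x : V | ancEq parent w' x}) := by
  have hup : ¬ ancEq parent u p := fun h => hpu' (antisymm' hroot hreach hpu h)
  have hpr : p ≠ r := by
    intro h
    obtain ⟨k, hk⟩ := hvp
    rw [h, Function.iterate_fixed hroot] at hk
    exact hvp' (hk ▸ h.symm)
  -- child of p towards u
  obtain ⟨y', hy'p, hy'u⟩ := exists_child hpu hpu'
  -- child of v towards p
  obtain ⟨y'', hy''v, hy''p⟩ := exists_child hvp hvp'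
  have hy''u : ancEq parent y'' u := trans' hy''p hpu
  refine ⟨?_, ?_, ?_, ?_⟩
  · ext x
    simp only [Set.mem_union, Set.mem_iUnion, Set.mem_setOf_eq, exists_prop]
    constructor
    · rintro ⟨y, hyv, hyu, hyx, hxc⟩
      by_cases hpx : ancEq parent p x
      · by_cases hxp : x = p
        · subst hxp
          exact Or.inl (Or.inr ⟨y'', hy''v, hy''p, hy''p, Or.inl rfl⟩)
        · obtain ⟨z, hzp, hzx⟩ := exists_child hpx (fun h => hxp h.symm)
          by_cases hzu : ancEq parent z u
          · exact Or.inl (Or.inl ⟨z, hzp, hzu, hzx, hxc⟩)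
          · have hznp : z ≠ p := by
              intro h
              exact hpr (cycle_root hroot hreach (k := 1) one_ne_zero
                (by simpa [h] using hzp))
            exact Or.inr ⟨z, ⟨hzp, hzu, hznp⟩, hzx⟩
      · -- x lies above the subtree of p : it is in between p v
        rcases total' hyu hy''u with h | h
        · exact Or.inl (Or.inr ⟨y, hyv, trans' h hy''p, hyx, Or.inr hpx⟩)
        · rcases sib hroot hreach hy''v hyv h with h' | h'
          · exact Or.inl (Or.inr ⟨y'', hy''v, hy''p, h' ▸ hyx, Or.inr hpx⟩)
          · exact Or.inl (Or.inr ⟨y'', hy''v, hy''p, h' ▸ hreach x, Or.inr hpx⟩)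
    · rintro (⟨⟨z, hzp, hzu, hzx, hc⟩ | ⟨t, htv, htp, htx, hc⟩⟩ | ⟨w, ⟨hwp, hwu, hwne⟩, hwx⟩)
      · exact ⟨y'', hy''v, hy''u, trans' (trans' hy''p ⟨1, hzp⟩) hzx, hc⟩
      · refine ⟨t, htv, trans' htp hpu, htx, Or.inr ?_⟩
        rcases hc with rfl | hc
        · exact hup
        · exact fun h => hc (trans' hpu h)
      · refine ⟨y'', hy''v, hy''u, trans' hy''p (trans' ⟨1, hwp⟩ hwx), Or.inr ?_⟩
        intro hux
        rcases total' hux hwx with h | h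
        · by_cases huw : u = w
          · exact hwu (huw ▸ ⟨0, rfl⟩)
          · exact hup (hwp ▸ anc_parent h huw)
        · exact hwu h
  · rw [Set.disjoint_left]
    rintro x ⟨z, hzp, hzu, hzx, hc1⟩ ⟨t, htv, htp, htx, hc2⟩
    have hpx : ancEq parent p x := trans' ⟨1, hzp⟩ hzx
    rcases hc2 with rfl | hc2
    · exact hpr (child_not_anc hroot hreach hzp hzx)
    · exact hc2 hpx
  · intro w hwp hwu hwne
    rw [Set.disjoint_left]
    rintro x hwx (⟨z, hzp, hzu, hzx, hc⟩ | ⟨t, htv, htp, htx, hc⟩)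
    · rcases total' hwx hzx with h | h
      · exact hwu (trans' h hzu)
      · rcases sib hroot hreach hzp hwp h with h' | h'
        · exact hwu (h' ▸ hzu)
        · exact hpr (by rw [← hzp, h', hroot])
    · have hpx : ancEq parent p x := trans' ⟨1, hwp⟩ hwx
      rcases hc with rfl | hc
      · exact hpr (child_not_anc hroot hreach hwp hwx)
      · exact hc hpx
  · intro w w' hwp hwu hwne hw'p hw'u hw'ne hww'
    rw [Set.disjoint_left]
    rintro x hwx hw'x
    rcases total' hwx hw'x with h | h
    · rcases sib hroot hreach hwp hw'p h with h' | h'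
      · exact hww' h'
      · exact hpr (by rw [← hwp, h', hroot])
    · rcases sib hroot hreach hw'p hwp h with h' | h'
      · exact hww' h'.symm
      · exact hpr (by rw [← hw'p, h', hroot])
end
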